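/- Let φ : Ω → Ω' be a C¹ diffeomorphism between domains in ℝⁿ such that K_n(x,φ) = max(‖Dφ(x)‖ⁿ/|det Dφ(x)|, |det Dφ(x)|/l(Dφ(x))ⁿ) ≤ K for all x and some constant K ≥ 1. Then for every C¹ function f on Ω, ∫_{Ω'} |∇(f∘φ^{-1})(y)|ⁿ dy ≤ K · ∫_Ω |∇f(x)|ⁿ dx; that is, φ^{-1} induces a bounded composition operator L^{1,n}(Ω) → L^{1,n}(Ω') with norm at most K^{1/n}. -/

import Mathlib

open MeasureTheory Metric Set

/-- Minimal stretching `l(A) = min_{|h|=1} |Ah|` of a continuous linear map. -/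
noncomputable def lMin {n : ℕ}
    (A : EuclideanSpace ℝ (Fin n) →L[ℝ] EuclideanSpace ℝ (Fin n)) : ℝ :=
  sInf {r | ∃ h : EuclideanSpace ℝ (Fin n), ‖h‖ = 1 ∧ r = ‖A h‖}

/-- Determinant of a continuous linear map. -/
noncomputable def detCLM {n : ℕ}
    (A : EuclideanSpace ℝ (Fin n) →L[ℝ] EuclideanSpace ℝ (Fin n)) : ℝ :=
  LinearMap.det (A : EuclideanSpace ℝ (Fin n) →ₗ[ℝ] EuclideanSpace ℝ (Fin n))

/-! The chain rule gives `∇f(x) = ∇(f ∘ ψ)(φ x) ∘ Dφ(x)`, hence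
`|∇(f ∘ ψ)(φ x)| · l(Dφ(x)) ≤ |∇f(x)| ≤ |∇(f ∘ ψ)(φ x)| · ‖Dφ(x)‖`. The two halves of the
dilatation bound turn these into `|J| · |∇(f ∘ ψ) ∘ φ|ⁿ ≤ K |∇f|ⁿ` and
`|∇f|ⁿ ≤ K |J| · |∇(f ∘ ψ) ∘ φ|ⁿ` with `J = det Dφ`, and the change of variables `y = φ x`
integrates the first one. The second is needed only because a divergent Bochner integral is `0`:
it makes both sides diverge together. -/

section LinearAlgebra

variable {n : ℕ} {A : EuclideanSpace ℝ (Fin n) →L[ℝ] EuclideanSpace ℝ (Fin n)}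

theorem bijective_of_detCLM_ne_zero (hA : detCLM A ≠ 0) : Function.Bijective A :=
  (Module.End.isUnit_iff _).mp
    ((LinearMap.isUnit_iff_isUnit_det _).mpr (isUnit_iff_ne_zero.mpr hA))

theorem lMin_mul_norm_le (v : EuclideanSpace ℝ (Fin n)) : lMin A * ‖v‖ ≤ ‖A v‖ := by
  rcases eq_or_ne v 0 with rfl | hv
  · simp
  have hv' : 0 < ‖v‖ := norm_pos_iff.mpr hv
  have hunit : ‖‖v‖⁻¹ • v‖ = 1 := by
    rw [norm_smul, norm_inv, norm_norm, inv_mul_cancel₀ hv'.ne']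
  have hle : lMin A ≤ ‖A (‖v‖⁻¹ • v)‖ :=
    csInf_le ⟨0, by rintro _ ⟨h, -, rfl⟩; positivity⟩ ⟨_, hunit, rfl⟩
  rw [map_smul, norm_smul, norm_inv, norm_norm] at hle
  rwa [← le_div_iff₀ hv', div_eq_inv_mul]

theorem lMin_pos [NeZero n] (hA : Function.Injective A) : 0 < lMin A := by
  have hcont : Continuous fun h => ‖A h‖ := by fun_prop
  obtain ⟨h₀, hh₀, hmin⟩ := (isCompact_sphere (0 : EuclideanSpace ℝ (Fin n)) 1).exists_isMinOn
    (NormedSpace.sphere_nonempty.mpr zero_le_one) hcont.continuousOn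
  rw [mem_sphere_zero_iff_norm] at hh₀
  have hAh₀ : 0 < ‖A h₀‖ :=
    norm_pos_iff.mpr fun h => by simp [hA (h.trans (map_zero A).symm)] at hh₀
  refine hAh₀.trans_le (le_csInf ⟨_, h₀, hh₀, rfl⟩ ?_)
  rintro _ ⟨h, hh, rfl⟩
  exact hmin (mem_sphere_zero_iff_norm.mpr hh)

theorem norm_mul_lMin_le_norm_comp {F : Type*} [NormedAddCommGroup F] [NormedSpace ℝ F]
    (hA : Function.Surjective A) (D : EuclideanSpace ℝ (Fin n) →L[ℝ] F) :
    ‖D‖ * lMin A ≤ ‖D.comp A‖ := by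
  have hl : 0 ≤ lMin A := Real.sInf_nonneg (by rintro _ ⟨h, -, rfl⟩; positivity)
  rw [mul_comm, ← Real.norm_of_nonneg hl, ← norm_smul]
  refine (lMin A • D).opNorm_le_bound (norm_nonneg _) fun w => ?_
  obtain ⟨v, rfl⟩ := hA w
  calc ‖(lMin A • D) (A v)‖ = lMin A * ‖D.comp A v‖ := by
        rw [smul_apply, norm_smul, Real.norm_of_nonneg hl]; rfl
    _ ≤ lMin A * (‖D.comp A‖ * ‖v‖) := by gcongr; exact (D.comp A).le_opNorm v
    _ = ‖D.comp A‖ * (lMin A * ‖v‖) := by ring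
    _ ≤ ‖D.comp A‖ * ‖A v‖ := by gcongr; exact lMin_mul_norm_le v

theorem abs_detCLM_mul_norm_pow_le [NeZero n] {F : Type*} [NormedAddCommGroup F]
    [NormedSpace ℝ F] {K : ℝ} (hA : detCLM A ≠ 0) (hK : |detCLM A| / lMin A ^ n ≤ K)
    (D : EuclideanSpace ℝ (Fin n) →L[ℝ] F) :
    |detCLM A| * ‖D‖ ^ n ≤ K * ‖D.comp A‖ ^ n := by
  have hl : 0 < lMin A := lMin_pos (bijective_of_detCLM_ne_zero hA).injective
  calc |detCLM A| * ‖D‖ ^ n = |detCLM A| / lMin A ^ n * (‖D‖ * lMin A) ^ n := by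
        rw [mul_pow]; field_simp
    _ ≤ K * ‖D.comp A‖ ^ n := by
        gcongr
        · exact (div_nonneg (abs_nonneg _) (by positivity)).trans hK
        · exact norm_mul_lMin_le_norm_comp (bijective_of_detCLM_ne_zero hA).surjective D

theorem norm_comp_pow_le {F : Type*} [NormedAddCommGroup F] [NormedSpace ℝ F] {K : ℝ}
    (hA : detCLM A ≠ 0) (hK : ‖A‖ ^ n / |detCLM A| ≤ K)
    (D : EuclideanSpace ℝ (Fin n) →L[ℝ] F) :
    ‖D.comp A‖ ^ n ≤ K * (|detCLM A| * ‖D‖ ^ n) := by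
  rw [div_le_iff₀ (abs_pos.mpr hA)] at hK
  calc ‖D.comp A‖ ^ n ≤ (‖D‖ * ‖A‖) ^ n := by gcongr; exact D.opNorm_comp_le A
    _ = ‖D‖ ^ n * ‖A‖ ^ n := mul_pow _ _ _
    _ ≤ ‖D‖ ^ n * (K * |detCLM A|) := by gcongr
    _ = K * (|detCLM A| * ‖D‖ ^ n) := by ring

end LinearAlgebra

theorem fderiv_eq_fderiv_comp_leftInverse_comp {𝕜 E F G : Type*} [NontriviallyNormedField 𝕜]
    [NormedAddCommGroup E] [NormedSpace 𝕜 E] [NormedAddCommGroup F] [NormedSpace 𝕜 F]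
    [NormedAddCommGroup G] [NormedSpace 𝕜 G] {φ : E → F} {ψ : F → E} {f : E → G}
    {A : E →L[𝕜] F} {x : E} (hφ : HasFDerivAt φ A x) (hψ : DifferentiableAt 𝕜 ψ (φ x))
    (hf : DifferentiableAt 𝕜 f x) (hinv : ∀ᶠ y in nhds x, ψ (φ y) = y) :
    fderiv 𝕜 f x = (fderiv 𝕜 (f ∘ ψ) (φ x)).comp A := by
  have hfψ : DifferentiableAt 𝕜 (f ∘ ψ) (φ x) := by
    refine DifferentiableAt.comp (φ x) ?_ hψ
    rwa [hinv.self_of_nhds]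
  have hf_eq : (f ∘ ψ) ∘ φ =ᶠ[nhds x] f := hinv.mono fun y hy => by simp [hy]
  exact ((hfψ.hasFDerivAt.comp x hφ).congr_of_eventuallyEq hf_eq.symm).fderiv

theorem integral_norm_fderiv_pow {E F : Type*} [NormedAddCommGroup E] [NormedSpace ℝ E]
    [MeasurableSpace E] [OpensMeasurableSpace E] [NormedAddCommGroup F] [NormedSpace ℝ F]
    [CompleteSpace F] (μ : Measure E) (f : E → F) (n : ℕ) :
    ∫ x, ‖fderiv ℝ f x‖ ^ n ∂μ = (∫⁻ x, ENNReal.ofReal (‖fderiv ℝ f x‖ ^ n) ∂μ).toReal :=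
  integral_eq_lintegral_of_nonneg_ae (.of_forall fun _ => by positivity)
    ((measurable_fderiv ℝ f).norm.pow_const n).aestronglyMeasurable

theorem setLIntegral_ofReal_le_ofReal_mul {α : Type*} [MeasurableSpace α] {μ : Measure α}
    {s : Set α} (hs : MeasurableSet s) {F G : α → ℝ} {K : ℝ} (hK : 0 ≤ K)
    (h : ∀ x ∈ s, F x ≤ K * G x) :
    ∫⁻ x in s, ENNReal.ofReal (F x) ∂μ ≤ ENNReal.ofReal K * ∫⁻ x in s, ENNReal.ofReal (G x) ∂μ := by
  rw [← lintegral_const_mul' _ _ ENNReal.ofReal_ne_top]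
  refine setLIntegral_mono' hs fun x hx => ?_
  rw [← ENNReal.ofReal_mul hK]
  exact ENNReal.ofReal_le_ofReal (h x hx)

theorem ENNReal.toReal_le_mul_toReal_of_le_of_le {P Q : ENNReal} {K : ℝ} (hK : 0 ≤ K)
    (hPQ : P ≤ ENNReal.ofReal K * Q) (hQP : Q ≤ ENNReal.ofReal K * P) :
    P.toReal ≤ K * Q.toReal := by
  rcases eq_or_ne Q ⊤ with rfl | hQ
  · have hP : P = ⊤ := by
      by_contra hP
      exact ENNReal.mul_ne_top ENNReal.ofReal_ne_top hP (top_le_iff.mp hQP)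
    simp [hP]
  · simpa [ENNReal.toReal_mul, ENNReal.toReal_ofReal hK] using
      ENNReal.toReal_mono (ENNReal.mul_ne_top ENNReal.ofReal_ne_top hQ) hPQ

theorem quasiconformal_composition_operator_general {n : ℕ} (hn : 2 ≤ n)
    (Ω Ω' : Set (EuclideanSpace ℝ (Fin n))) (hΩ : IsOpen Ω) (hΩ' : IsOpen Ω')
    (φ ψ : EuclideanSpace ℝ (Fin n) → EuclideanSpace ℝ (Fin n))
    (hψC1 : ContDiffOn ℝ 1 ψ Ω')
    (hbij : Set.BijOn φ Ω Ω') (hinv : Set.InvOn ψ φ Ω Ω')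
    (A : EuclideanSpace ℝ (Fin n) →
      (EuclideanSpace ℝ (Fin n) →L[ℝ] EuclideanSpace ℝ (Fin n)))
    (hA : ∀ x ∈ Ω, HasFDerivAt φ (A x) x)
    (hAdet : ∀ x ∈ Ω, detCLM (A x) ≠ 0)
    (K : ℝ) (hK : 1 ≤ K)
    (hqc : ∀ x ∈ Ω,
      max (‖A x‖ ^ n / |detCLM (A x)|) (|detCLM (A x)| / (lMin (A x)) ^ n) ≤ K)
    (f : EuclideanSpace ℝ (Fin n) → ℝ) (hf : ContDiffOn ℝ 1 f Ω) :
    ∫ y in Ω', ‖fderiv ℝ (f ∘ ψ) y‖ ^ n ≤ K * ∫ x in Ω, ‖fderiv ℝ f x‖ ^ n := by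
  have : NeZero n := ⟨by omega⟩
  have hK₀ : 0 ≤ K := zero_le_one.trans hK
  have hchain : ∀ x ∈ Ω, fderiv ℝ f x = (fderiv ℝ (f ∘ ψ) (φ x)).comp (A x) := fun x hx ↦
    fderiv_eq_fderiv_comp_leftInverse_comp (hA x hx)
      (hψC1.differentiableOn_one.differentiableAt (hΩ'.mem_nhds (hbij.mapsTo hx)))
      (hf.differentiableOn_one.differentiableAt (hΩ.mem_nhds hx))
      (Filter.eventually_of_mem (hΩ.mem_nhds hx) hinv.1)
  have hchange : ∫⁻ y in Ω', ENNReal.ofReal (‖fderiv ℝ (f ∘ ψ) y‖ ^ n) =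
      ∫⁻ x in Ω, ENNReal.ofReal (|detCLM (A x)| * ‖fderiv ℝ (f ∘ ψ) (φ x)‖ ^ n) := by
    simp_rw [← hbij.image_eq, ENNReal.ofReal_mul (abs_nonneg _)]
    exact lintegral_image_eq_lintegral_abs_det_fderiv_mul volume hΩ.measurableSet
      (fun x hx => (hA x hx).hasFDerivWithinAt) hbij.injOn _
  rw [integral_norm_fderiv_pow, integral_norm_fderiv_pow, hchange]
  refine ENNReal.toReal_le_mul_toReal_of_le_of_le hK₀
    (setLIntegral_ofReal_le_ofReal_mul hΩ.measurableSet hK₀ fun x hx => ?_)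
    (setLIntegral_ofReal_le_ofReal_mul hΩ.measurableSet hK₀ fun x hx => ?_) <;> rw [hchain x hx]
  · exact abs_detCLM_mul_norm_pow_le (hAdet x hx) ((le_max_right _ _).trans (hqc x hx)) _
  · exact norm_comp_pow_le (hAdet x hx) ((le_max_left _ _).trans (hqc x hx)) _

/-- a C¹ diffeomorphism with maximal dilatation bounded by the
constant `K` induces a bounded composition operator `L^{1,n}(Ω) → L^{1,n}(Ω')`:
`∫_{Ω'} |∇(f∘φ⁻¹)|ⁿ ≤ K · ∫_Ω |∇f|ⁿ`. -/
theorem quasiconformal_composition_operator {n : ℕ} (hn : 2 ≤ n)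
    (Ω Ω' : Set (EuclideanSpace ℝ (Fin n))) (hΩ : IsOpen Ω) (hΩ' : IsOpen Ω')
    (φ ψ : EuclideanSpace ℝ (Fin n) → EuclideanSpace ℝ (Fin n))
    (hφC1 : ContDiffOn ℝ 1 φ Ω) (hψC1 : ContDiffOn ℝ 1 ψ Ω')
    (hbij : Set.BijOn φ Ω Ω') (hinv : Set.InvOn ψ φ Ω Ω')
    (A : EuclideanSpace ℝ (Fin n) →
      (EuclideanSpace ℝ (Fin n) →L[ℝ] EuclideanSpace ℝ (Fin n)))
    (hA : ∀ x ∈ Ω, HasFDerivAt φ (A x) x)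
    (hAdet : ∀ x ∈ Ω, detCLM (A x) ≠ 0)
    (K : ℝ) (hK : 1 ≤ K)
    (hqc : ∀ x ∈ Ω,
      max (‖A x‖ ^ n / |detCLM (A x)|) (|detCLM (A x)| / (lMin (A x)) ^ n) ≤ K)
    (f : EuclideanSpace ℝ (Fin n) → ℝ) (hf : ContDiffOn ℝ 1 f Ω) :
    ∫ y in Ω', ‖fderiv ℝ (f ∘ ψ) y‖ ^ n ≤ K * ∫ x in Ω, ‖fderiv ℝ f x‖ ^ n :=
  quasiconformal_composition_operator_general hn Ω Ω' hΩ hΩ' φ ψ hψC1 hbij hinv A hA hAdet K hK hqc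
    f hf
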